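/- arXiv:1311.7065 — 6 statements merged into one kernel-verified Lean document; each statement's English description precedes it below -/
import Mathlib

section
/- Under the stated assumptions, the analytically bias-corrected estimator β̃^A := (1 + 1/N + 1/T)·β̂_{N,T} satisfies E[β̃^A] = β·(1 − 1/T² − 1/N² − 1/(NT) + 1/(NT²) + 1/(N²T)); in particular its bias is of order max(N,T)^{-2} rather than max(N,T)^{-1}. -/
/-!
Write `ε i t = Y i t - α i - γ t`. The two-way within transformation is double centering,
`x ↦ C_N x C_T` with the centering matrix `C_n = I - n⁻¹ J`, so it annihilates the fixed effects
and the summand `(i, t)` of `β̂` is the square of `∑ (C_N)_{ij} (C_T)_{ts} ε j s`. Since the errors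
are orthogonal with common variance `β`, its expectation is `β` times the sum of the squared
coefficients, which factors as `(1 - 1/N)(1 - 1/T)` because `C_n` is an idempotent with diagonal
`1 - 1/n`. Hence `E[β̂] = β (1 - 1/N)(1 - 1/T)`, and multiplying by `1 + 1/N + 1/T` gives the claim.
-/

open MeasureTheory Finset

section Orthogonal

variable {Ω ι : Type*} [MeasurableSpace Ω] {μ : Measure Ω} [Fintype ι]
  {ε : ι → Ω → ℝ} {β : ℝ}

lemma integrable_sq_sum_mul (hL2 : ∀ p, MemLp (ε p) 2 μ) (c : ι → ℝ) :
    Integrable (fun ω => (∑ p, c p * ε p ω) ^ 2) μ :=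
  (memLp_finsetSum univ fun p _ => (hL2 p).const_mul (c p)).integrable_sq

lemma integral_sq_sum_mul_of_orthogonal [DecidableEq ι] (hL2 : ∀ p, MemLp (ε p) 2 μ)
    (hvar : ∀ p, ∫ ω, ε p ω ^ 2 ∂μ = β)
    (horth : ∀ p q, p ≠ q → ∫ ω, ε p ω * ε q ω ∂μ = 0) (c : ι → ℝ) :
    ∫ ω, (∑ p, c p * ε p ω) ^ 2 ∂μ = β * ∑ p, c p ^ 2 := by
  have hcov : ∀ p q, ∫ ω, ε p ω * ε q ω ∂μ = if p = q then β else 0 := by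
    intro p q
    split_ifs with h
    · subst h; simpa only [sq] using hvar p
    · exact horth p q h
  have hint : ∀ p q, Integrable (fun ω => c p * c q * (ε p ω * ε q ω)) μ := fun p q =>
    ((hL2 p).integrable_mul (hL2 q)).const_mul _
  calc ∫ ω, (∑ p, c p * ε p ω) ^ 2 ∂μ
      = ∫ ω, ∑ p, ∑ q, c p * c q * (ε p ω * ε q ω) ∂μ := by
        congr 1; funext ω
        rw [sq, sum_mul_sum]
        exact sum_congr rfl fun p _ => sum_congr rfl fun q _ => by ring
    _ = ∑ p, ∑ q, c p * c q * (if p = q then β else 0) := by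
        rw [integral_finsetSum _ fun p _ => integrable_finsetSum _ fun q _ => hint p q]
        refine sum_congr rfl fun p _ => ?_
        rw [integral_finsetSum _ fun q _ => hint p q]
        exact sum_congr rfl fun q _ => by rw [integral_const_mul, hcov]
    _ = β * ∑ p, c p ^ 2 := by
        simp only [mul_ite, mul_zero, sum_ite_eq, mem_univ, if_true, mul_sum]
        exact sum_congr rfl fun p _ => by ring

lemma integral_sum_sq_sum_mul_of_orthogonal [DecidableEq ι] {κ : Type*} [Fintype κ]
    (hL2 : ∀ p, MemLp (ε p) 2 μ) (hvar : ∀ p, ∫ ω, ε p ω ^ 2 ∂μ = β)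
    (horth : ∀ p q, p ≠ q → ∫ ω, ε p ω * ε q ω ∂μ = 0) (c : κ → ι → ℝ) :
    ∫ ω, ∑ k, (∑ p, c k p * ε p ω) ^ 2 ∂μ = β * ∑ k, ∑ p, c k p ^ 2 := by
  rw [integral_finsetSum _ fun k _ => integrable_sq_sum_mul hL2 (c k), mul_sum]
  exact sum_congr rfl fun k _ => integral_sq_sum_mul_of_orthogonal hL2 hvar horth (c k)

end Orthogonal

noncomputable def centering (n : ℕ) (i j : Fin n) : ℝ :=
  (if i = j then 1 else 0) - (n : ℝ)⁻¹

section Centering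

variable {n : ℕ}

lemma sum_centering_mul (i : Fin n) (x : Fin n → ℝ) :
    ∑ j, centering n i j * x j = x i - (n : ℝ)⁻¹ * ∑ j, x j := by
  simp only [centering, sub_mul, sum_sub_distrib, ite_mul, one_mul, zero_mul, sum_ite_eq,
    mem_univ, if_true, mul_sum]

lemma sum_centering (hn : n ≠ 0) (i : Fin n) : ∑ j, centering n i j = 0 := by
  simpa [hn] using sum_centering_mul i fun _ => 1

lemma sum_centering_sq (hn : n ≠ 0) (i : Fin n) :
    ∑ j, centering n i j ^ 2 = 1 - (n : ℝ)⁻¹ := by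
  calc ∑ j, centering n i j ^ 2 = ∑ j, centering n i j * centering n i j := by simp only [sq]
    _ = centering n i i - (n : ℝ)⁻¹ * 0 := by rw [sum_centering_mul, sum_centering hn]
    _ = 1 - (n : ℝ)⁻¹ := by simp [centering]

end Centering

section DoubleCentering

variable {N T : ℕ}

lemma sum_sum_centering_mul (i : Fin N) (t : Fin T) (x : Fin N → Fin T → ℝ) :
    ∑ j, ∑ s, centering N i j * centering T t s * x j s
      = x i t - (T : ℝ)⁻¹ * ∑ s, x i s - (N : ℝ)⁻¹ * ∑ j, x j t
        + ((N : ℝ) * T)⁻¹ * ∑ j, ∑ s, x j s := by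
  simp only [mul_assoc, ← mul_sum, sum_centering_mul, sum_sub_distrib, mul_sub, mul_inv]
  ring

lemma sum_sum_centering_mul_add_eq_zero (hN : N ≠ 0) (hT : T ≠ 0) (i : Fin N) (t : Fin T)
    (a : Fin N → ℝ) (b : Fin T → ℝ) :
    ∑ j, ∑ s, centering N i j * centering T t s * (a j + b s) = 0 := by
  have hsplit : ∀ j s, centering N i j * centering T t s * (a j + b s)
      = centering N i j * a j * centering T t s + centering N i j * (centering T t s * b s) :=
    fun j s => by ring
  simp only [hsplit, sum_add_distrib, ← mul_sum, sum_centering hT, mul_zero, zero_add, ← sum_mul,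
    sum_centering hN, zero_mul]

lemma sum_sum_centering_mul_sub_sub (hN : N ≠ 0) (hT : T ≠ 0) (i : Fin N) (t : Fin T)
    (x : Fin N → Fin T → ℝ) (a : Fin N → ℝ) (b : Fin T → ℝ) :
    ∑ j, ∑ s, centering N i j * centering T t s * (x j s - a j - b s)
      = ∑ j, ∑ s, centering N i j * centering T t s * x j s := by
  rw [← sub_zero (∑ j, ∑ s, centering N i j * centering T t s * x j s),
    ← sum_sum_centering_mul_add_eq_zero hN hT i t a b, ← sum_sub_distrib]
  exact sum_congr rfl fun j _ => by rw [← sum_sub_distrib]; exact sum_congr rfl fun s _ => by ring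

lemma sum_sq_centering_mul_centering (hN : N ≠ 0) (hT : T ≠ 0) (i : Fin N) (t : Fin T) :
    ∑ p : Fin N × Fin T, (centering N i p.1 * centering T t p.2) ^ 2
      = (1 - (N : ℝ)⁻¹) * (1 - (T : ℝ)⁻¹) := by
  simp only [mul_pow, Fintype.sum_prod_type, ← mul_sum, ← sum_mul, sum_centering_sq hN,
    sum_centering_sq hT]

end DoubleCentering

theorem analytical_bias_correction_general
    {Ω : Type*} [MeasurableSpace Ω] {P : Measure Ω}
    {N T : ℕ} (hN : 1 ≤ N) (hT : 1 ≤ T)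
    (β : ℝ) (α : Fin N → ℝ) (γ : Fin T → ℝ)
    (Y : Fin N → Fin T → Ω → ℝ)
    (hL2 : ∀ (i : Fin N) (t : Fin T), MemLp (fun ω => Y i t ω - α i - γ t) 2 P)
    (hvar : ∀ (i : Fin N) (t : Fin T), ∫ ω, (Y i t ω - α i - γ t) ^ 2 ∂P = β)
    (horth : ∀ (i j : Fin N) (t s : Fin T), (i, t) ≠ (j, s) →
      ∫ ω, (Y i t ω - α i - γ t) * (Y j s ω - α j - γ s) ∂P = 0) :
    ∫ ω, (1 + 1 / (N : ℝ) + 1 / (T : ℝ)) *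
        (((N : ℝ) * T)⁻¹ * ∑ i, ∑ t,
          (Y i t ω - (T : ℝ)⁻¹ * ∑ s, Y i s ω - (N : ℝ)⁻¹ * ∑ j, Y j t ω
            + ((N : ℝ) * T)⁻¹ * ∑ j, ∑ s, Y j s ω) ^ 2) ∂P
      = β * (1 - 1 / (T : ℝ) ^ 2 - 1 / (N : ℝ) ^ 2 - 1 / ((N : ℝ) * T)
          + 1 / ((N : ℝ) * (T : ℝ) ^ 2) + 1 / ((N : ℝ) ^ 2 * T)) := by
  have hN0 : N ≠ 0 := by omega
  have hT0 : T ≠ 0 := by omega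
  have hwithin : ∀ ω, ∑ i, ∑ t, (Y i t ω - (T : ℝ)⁻¹ * ∑ s, Y i s ω - (N : ℝ)⁻¹ * ∑ j, Y j t ω
      + ((N : ℝ) * T)⁻¹ * ∑ j, ∑ s, Y j s ω) ^ 2
      = ∑ k : Fin N × Fin T, (∑ p : Fin N × Fin T, centering N k.1 p.1 * centering T k.2 p.2
          * (Y p.1 p.2 ω - α p.1 - γ p.2)) ^ 2 := fun ω => by
    simp only [Fintype.sum_prod_type, sum_sum_centering_mul_sub_sub hN0 hT0,
      sum_sum_centering_mul]
  simp only [hwithin]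
  rw [integral_const_mul, integral_const_mul,
    integral_sum_sq_sum_mul_of_orthogonal
      (ε := fun (p : Fin N × Fin T) ω => Y p.1 p.2 ω - α p.1 - γ p.2)
      (fun p => hL2 p.1 p.2) (fun p => hvar p.1 p.2) (fun p q h => horth p.1 q.1 p.2 q.2 h)]
  simp only [sum_sq_centering_mul_centering hN0 hT0, sum_const, card_univ, Fintype.card_prod,
    Fintype.card_fin, nsmul_eq_mul, Nat.cast_mul]
  field_simp
  ring

/-- The analytically bias-corrected estimator `β̃^A = (1 + 1/N + 1/T)·β̂_{N,T}` satisfies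
`E[β̃^A] = β·(1 − 1/T² − 1/N² − 1/(NT) + 1/(NT²) + 1/(N²T))`, so its bias is of
order `max(N,T)^{-2}`. -/
theorem analytical_bias_correction
    {Ω : Type*} [MeasurableSpace Ω] {P : Measure Ω} [IsProbabilityMeasure P]
    {N T : ℕ} (hN : 1 ≤ N) (hT : 1 ≤ T)
    (β : ℝ) (α : Fin N → ℝ) (γ : Fin T → ℝ)
    (Y : Fin N → Fin T → Ω → ℝ)
    (hL2 : ∀ (i : Fin N) (t : Fin T), MemLp (fun ω => Y i t ω - α i - γ t) 2 P)
    (hmean : ∀ (i : Fin N) (t : Fin T), ∫ ω, (Y i t ω - α i - γ t) ∂P = 0)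
    (hvar : ∀ (i : Fin N) (t : Fin T), ∫ ω, (Y i t ω - α i - γ t) ^ 2 ∂P = β)
    (horth : ∀ (i j : Fin N) (t s : Fin T), (i, t) ≠ (j, s) →
      ∫ ω, (Y i t ω - α i - γ t) * (Y j s ω - α j - γ s) ∂P = 0) :
    ∫ ω, (1 + 1 / (N : ℝ) + 1 / (T : ℝ)) *
        (((N : ℝ) * T)⁻¹ * ∑ i, ∑ t,
          (Y i t ω - (T : ℝ)⁻¹ * ∑ s, Y i s ω - (N : ℝ)⁻¹ * ∑ j, Y j t ω
            + ((N : ℝ) * T)⁻¹ * ∑ j, ∑ s, Y j s ω) ^ 2) ∂P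
      = β * (1 - 1 / (T : ℝ) ^ 2 - 1 / (N : ℝ) ^ 2 - 1 / ((N : ℝ) * T)
          + 1 / ((N : ℝ) * (T : ℝ) ^ 2) + 1 / ((N : ℝ) ^ 2 * T)) :=
  analytical_bias_correction_general hN hT β α γ Y hL2 hvar horth
end

section
/- Under the stated assumptions, the higher-order split-panel jackknife estimator is exactly unbiased: E[4·β̂_{N,T} − 2·β̃_{N,T/2} − 2·β̃_{N/2,T} + β̃_{N/2,T/2}] = β. -/
/-!
On a subpanel `I × S` the within transformation is `x ↦ M_I x M_S`, with centering matrices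
`M_I = 1 - 𝟙𝟙ᵀ / |I|`. It annihilates the fixed effects `α_i + γ_t`, so `β̂_{I,S}` depends only on
the errors, and since these are uncorrelated with common variance `β`,
`E β̂_{I,S} = β / (|I||S|) · ∑_{i,t} ∑_{j,s} (M_I)_{ij}² (M_S)_{ts}² = β (1 - 1/|I|) (1 - 1/|S|)`.
With `a = 1/N`, `b = 1/T` the four estimators thus have means `β(1-a)(1-b)`, `β(1-a)(1-2b)`,
`β(1-2a)(1-b)` and `β(1-2a)(1-2b)`, and the weights `4, -2, -2, 1` cancel every term except `β`.
-/

open MeasureTheory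

/-- The two-way fixed-effects variance estimator computed on the subpanel with
individuals in `I` and time periods in `S`. -/
noncomputable def subPanelEst {Ω : Type*} {N T : ℕ} (Y : Fin N → Fin T → Ω → ℝ)
    (I : Finset (Fin N)) (S : Finset (Fin T)) (ω : Ω) : ℝ :=
  ((I.card * S.card : ℕ) : ℝ)⁻¹ * ∑ i ∈ I, ∑ t ∈ S,
    (Y i t ω - ((S.card : ℕ) : ℝ)⁻¹ * ∑ s ∈ S, Y i s ω
      - ((I.card : ℕ) : ℝ)⁻¹ * ∑ j ∈ I, Y j t ω
      + ((I.card * S.card : ℕ) : ℝ)⁻¹ * ∑ j ∈ I, ∑ s ∈ S, Y j s ω) ^ 2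

/-- The first half `{1,…,n}` of the index set `{1,…,2n}`. -/
def firstHalf (n : ℕ) : Finset (Fin (2 * n)) :=
  Finset.univ.filter fun i => (i : ℕ) < n

/-- The second half `{n+1,…,2n}` of the index set `{1,…,2n}`. -/
def secondHalf (n : ℕ) : Finset (Fin (2 * n)) :=
  Finset.univ.filter fun i => n ≤ (i : ℕ)

open Finset

-- Spelled exactly as inside `subPanelEst`, so that `subPanelEst_eq_sum_twoWayResidual` is `rfl`.
noncomputable def twoWayResidual {ι κ : Type*} (I : Finset ι) (S : Finset κ) (x : ι → κ → ℝ)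
    (i : ι) (t : κ) : ℝ :=
  x i t - ((S.card : ℕ) : ℝ)⁻¹ * ∑ s ∈ S, x i s
    - ((I.card : ℕ) : ℝ)⁻¹ * ∑ j ∈ I, x j t
    + ((I.card * S.card : ℕ) : ℝ)⁻¹ * ∑ j ∈ I, ∑ s ∈ S, x j s

lemma subPanelEst_eq_sum_twoWayResidual {Ω : Type*} {N T : ℕ} (Y : Fin N → Fin T → Ω → ℝ)
    (I : Finset (Fin N)) (S : Finset (Fin T)) (ω : Ω) :
    subPanelEst Y I S ω = ((#I * #S : ℕ) : ℝ)⁻¹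
      * ∑ i ∈ I, ∑ t ∈ S, twoWayResidual I S (fun j s => Y j s ω) i t ^ 2 :=
  rfl

noncomputable section Centering

variable {ι κ : Type*} [DecidableEq ι] [DecidableEq κ]

def centeringWeight (I : Finset ι) (i j : ι) : ℝ :=
  (if j = i then 1 else 0) - (#I : ℝ)⁻¹

lemma sum_centeringWeight_mul {I : Finset ι} {i : ι} (hi : i ∈ I) (f : ι → ℝ) :
    ∑ j ∈ I, centeringWeight I i j * f j = f i - (#I : ℝ)⁻¹ * ∑ j ∈ I, f j := by
  simp only [centeringWeight, sub_mul, sum_sub_distrib, ite_mul, one_mul, zero_mul,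
    sum_ite_eq' I i f, if_pos hi, mul_sum]

lemma sum_centeringWeight {I : Finset ι} {i : ι} (hi : i ∈ I) :
    ∑ j ∈ I, centeringWeight I i j = 0 := by
  have hI : (#I : ℝ) ≠ 0 := Nat.cast_ne_zero.mpr (card_ne_zero_of_mem hi)
  simpa [hI] using sum_centeringWeight_mul hi fun _ => 1

lemma sum_centeringWeight_sq {I : Finset ι} {i : ι} (hi : i ∈ I) :
    ∑ j ∈ I, centeringWeight I i j ^ 2 = 1 - (#I : ℝ)⁻¹ := by
  simp_rw [sq, sum_centeringWeight_mul hi, sum_centeringWeight hi, centeringWeight]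
  simp

lemma twoWayResidual_eq_sum_centeringWeight {I : Finset ι} {S : Finset κ} {i : ι} {t : κ}
    (hi : i ∈ I) (ht : t ∈ S) (x : ι → κ → ℝ) :
    twoWayResidual I S x i t
      = ∑ j ∈ I, ∑ s ∈ S, centeringWeight I i j * centeringWeight S t s * x j s := by
  calc twoWayResidual I S x i t
      = (x i t - (#S : ℝ)⁻¹ * ∑ s ∈ S, x i s)
          - (#I : ℝ)⁻¹ * ∑ j ∈ I, (x j t - (#S : ℝ)⁻¹ * ∑ s ∈ S, x j s) := by
        simp only [twoWayResidual, sum_sub_distrib, ← mul_sum, Nat.cast_mul, mul_inv]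
        ring
    _ = ∑ j ∈ I, centeringWeight I i j * (x j t - (#S : ℝ)⁻¹ * ∑ s ∈ S, x j s) :=
        (sum_centeringWeight_mul hi fun j => x j t - (#S : ℝ)⁻¹ * ∑ s ∈ S, x j s).symm
    _ = ∑ j ∈ I, ∑ s ∈ S, centeringWeight I i j * centeringWeight S t s * x j s := by
        simp_rw [← sum_centeringWeight_mul ht, mul_sum, mul_assoc]

lemma twoWayResidual_sub_fixedEffects {I : Finset ι} {S : Finset κ} {i : ι} {t : κ}
    (hi : i ∈ I) (ht : t ∈ S) (x : ι → κ → ℝ) (a : ι → ℝ) (g : κ → ℝ) :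
    twoWayResidual I S (fun j s => x j s - a j - g s) i t = twoWayResidual I S x i t := by
  have ha : ∑ j ∈ I, ∑ s ∈ S, centeringWeight I i j * centeringWeight S t s * a j = 0 := by
    simp_rw [mul_right_comm _ _ (a _), ← mul_sum, sum_centeringWeight ht, mul_zero,
      sum_const_zero]
  have hg : ∑ j ∈ I, ∑ s ∈ S, centeringWeight I i j * centeringWeight S t s * g s = 0 := by
    simp_rw [mul_assoc, ← mul_sum, ← sum_mul, sum_centeringWeight hi, zero_mul]
  simp only [twoWayResidual_eq_sum_centeringWeight hi ht, mul_sub, sum_sub_distrib, ha, hg,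
    sub_zero]

end Centering

lemma subPanelEst_sub_fixedEffects {Ω : Type*} {N T : ℕ} (Y : Fin N → Fin T → Ω → ℝ)
    (α : Fin N → ℝ) (γ : Fin T → ℝ) (I : Finset (Fin N)) (S : Finset (Fin T)) :
    subPanelEst (fun i t ω => Y i t ω - α i - γ t) I S = subPanelEst Y I S := by
  ext ω
  simp only [subPanelEst_eq_sum_twoWayResidual]
  congr 1
  refine sum_congr rfl fun i hi => sum_congr rfl fun t ht => ?_
  rw [twoWayResidual_sub_fixedEffects hi ht]

section Moments

variable {Ω : Type*} [MeasurableSpace Ω] {P : Measure Ω}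

lemma integral_sq_sum_mul_of_uncorrelated {ι : Type*} (A : Finset ι) (c : ι → ℝ)
    {ε : ι → Ω → ℝ} {β : ℝ} (hL2 : ∀ p ∈ A, MemLp (ε p) 2 P)
    (hvar : ∀ p ∈ A, ∫ ω, ε p ω ^ 2 ∂P = β)
    (horth : ∀ p ∈ A, ∀ q ∈ A, p ≠ q → ∫ ω, ε p ω * ε q ω ∂P = 0) :
    ∫ ω, (∑ p ∈ A, c p * ε p ω) ^ 2 ∂P = (∑ p ∈ A, c p ^ 2) * β := by
  classical
  have hcov : ∀ p ∈ A, ∀ q ∈ A, ∫ ω, c p * ε p ω * (c q * ε q ω) ∂P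
      = if p = q then c p ^ 2 * β else 0 := by
    intro p hp q hq
    simp_rw [mul_mul_mul_comm, integral_const_mul]
    split_ifs with hpq
    · subst hpq; simp_rw [← hvar p hp, sq]
    · rw [horth p hp q hq hpq, mul_zero]
  have hint : ∀ p ∈ A, ∀ q ∈ A, Integrable (fun ω => c p * ε p ω * (c q * ε q ω)) P :=
    fun p hp q hq => ((hL2 p hp).const_mul (c p)).integrable_mul ((hL2 q hq).const_mul (c q))
  simp_rw [sq, sum_mul_sum]
  rw [integral_finsetSum _ fun p hp => integrable_finsetSum _ (hint p hp)]
  rw [sum_congr rfl fun p hp => (integral_finsetSum _ (hint p hp)).trans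
    (sum_congr rfl (hcov p hp))]
  simp [sum_mul, sq]

lemma memLp_twoWayResidual {ι κ : Type*} {ε : ι → κ → Ω → ℝ} (hL2 : ∀ i t, MemLp (ε i t) 2 P)
    (I : Finset ι) (S : Finset κ) (i : ι) (t : κ) :
    MemLp (fun ω => twoWayResidual I S (fun j s => ε j s ω) i t) 2 P := by
  unfold twoWayResidual
  exact (((hL2 i t).sub ((memLp_finsetSum S fun s _ => hL2 i s).const_mul _)).sub
    ((memLp_finsetSum I fun j _ => hL2 j t).const_mul _)).add
    ((memLp_finsetSum I fun j _ => memLp_finsetSum S fun s _ => hL2 j s).const_mul _)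

lemma integrable_subPanelEst {N T : ℕ} {ε : Fin N → Fin T → Ω → ℝ}
    (hL2 : ∀ i t, MemLp (ε i t) 2 P) (I : Finset (Fin N)) (S : Finset (Fin T)) :
    Integrable (subPanelEst ε I S) P :=
  (integrable_finsetSum _ fun i _ => integrable_finsetSum _ fun t _ =>
    (memLp_twoWayResidual hL2 I S i t).integrable_sq).const_mul _

lemma integral_subPanelEst {N T : ℕ} {ε : Fin N → Fin T → Ω → ℝ} {β : ℝ}
    (hL2 : ∀ i t, MemLp (ε i t) 2 P) (hvar : ∀ i t, ∫ ω, ε i t ω ^ 2 ∂P = β)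
    (horth : ∀ i j t s, (i, t) ≠ (j, s) → ∫ ω, ε i t ω * ε j s ω ∂P = 0)
    {I : Finset (Fin N)} {S : Finset (Fin T)} (hI : I.Nonempty) (hS : S.Nonempty) :
    ∫ ω, subPanelEst ε I S ω ∂P = β * ((1 - (#I : ℝ)⁻¹) * (1 - (#S : ℝ)⁻¹)) := by
  have hres : ∀ i ∈ I, ∀ t ∈ S,
      ∫ ω, twoWayResidual I S (fun j s => ε j s ω) i t ^ 2 ∂P
        = (1 - (#I : ℝ)⁻¹) * (1 - (#S : ℝ)⁻¹) * β := by
    intro i hi t ht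
    simp_rw [twoWayResidual_eq_sum_centeringWeight hi ht, ← sum_product']
    rw [integral_sq_sum_mul_of_uncorrelated (I ×ˢ S)
        (fun p => centeringWeight I i p.1 * centeringWeight S t p.2)
        (fun p _ => hL2 p.1 p.2) (fun p _ => hvar p.1 p.2)
        (fun p _ q _ hpq => horth p.1 q.1 p.2 q.2 hpq)]
    simp_rw [sum_product, mul_pow, ← mul_sum, ← sum_mul, sum_centeringWeight_sq hi,
      sum_centeringWeight_sq ht]
  have hI0 : (#I : ℝ) ≠ 0 := Nat.cast_ne_zero.mpr hI.card_ne_zero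
  have hS0 : (#S : ℝ) ≠ 0 := Nat.cast_ne_zero.mpr hS.card_ne_zero
  simp_rw [subPanelEst_eq_sum_twoWayResidual]
  rw [integral_const_mul, integral_finsetSum _ fun i _ => integrable_finsetSum _ fun t _ =>
    (memLp_twoWayResidual hL2 I S i t).integrable_sq]
  rw [sum_congr rfl fun i hi => (integral_finsetSum _ fun t _ =>
    (memLp_twoWayResidual hL2 I S i t).integrable_sq).trans (sum_congr rfl (hres i hi))]
  simp only [sum_const, nsmul_eq_mul, Nat.cast_mul]
  field_simp

end Moments

lemma card_firstHalf (n : ℕ) : #(firstHalf n) = n := by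
  simp only [firstHalf, Fin.card_filter_val_lt]
  omega

lemma card_secondHalf (n : ℕ) : #(secondHalf n) = n := by
  have h := card_filter_add_card_filter_not (s := univ) fun i : Fin (2 * n) => (i : ℕ) < n
  simp only [not_lt, Fin.card_filter_val_lt, card_univ, Fintype.card_fin] at h
  rw [secondHalf]
  omega

lemma firstHalf_nonempty {n : ℕ} (hn : 0 < n) : (firstHalf n).Nonempty :=
  card_pos.mp <| (card_firstHalf n).symm ▸ hn

lemma secondHalf_nonempty {n : ℕ} (hn : 0 < n) : (secondHalf n).Nonempty :=
  card_pos.mp <| (card_secondHalf n).symm ▸ hn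

theorem higher_order_split_panel_jackknife_unbiased_general
    {Ω : Type*} [MeasurableSpace Ω] {P : Measure Ω}
    {n m : ℕ} (hn : 1 ≤ n) (hm : 1 ≤ m)
    (β : ℝ) (α : Fin (2 * n) → ℝ) (γ : Fin (2 * m) → ℝ)
    (Y : Fin (2 * n) → Fin (2 * m) → Ω → ℝ)
    (hL2 : ∀ (i : Fin (2 * n)) (t : Fin (2 * m)),
      MemLp (fun ω => Y i t ω - α i - γ t) 2 P)
    (hvar : ∀ (i : Fin (2 * n)) (t : Fin (2 * m)),
      ∫ ω, (Y i t ω - α i - γ t) ^ 2 ∂P = β)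
    (horth : ∀ (i j : Fin (2 * n)) (t s : Fin (2 * m)), (i, t) ≠ (j, s) →
      ∫ ω, (Y i t ω - α i - γ t) * (Y j s ω - α j - γ s) ∂P = 0) :
    ∫ ω, (4 * subPanelEst Y Finset.univ Finset.univ ω
        - 2 * ((subPanelEst Y Finset.univ (firstHalf m) ω
            + subPanelEst Y Finset.univ (secondHalf m) ω) / 2)
        - 2 * ((subPanelEst Y (firstHalf n) Finset.univ ω
            + subPanelEst Y (secondHalf n) Finset.univ ω) / 2)
        + (subPanelEst Y (firstHalf n) (firstHalf m) ω
            + subPanelEst Y (firstHalf n) (secondHalf m) ω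
            + subPanelEst Y (secondHalf n) (firstHalf m) ω
            + subPanelEst Y (secondHalf n) (secondHalf m) ω) / 4) ∂P
      = β := by
  simp only [← subPanelEst_sub_fixedEffects Y α γ]
  set ε : Fin (2 * n) → Fin (2 * m) → Ω → ℝ := fun i t ω => Y i t ω - α i - γ t
  have hint (I S) : Integrable (subPanelEst ε I S) P := integrable_subPanelEst hL2 I S
  rw [integral_add, integral_sub, integral_sub, integral_const_mul, integral_const_mul,
    integral_const_mul, integral_div, integral_div, integral_div, integral_add, integral_add,
    integral_add, integral_add, integral_add]
  all_goals try fun_prop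
  have hN : (univ : Finset (Fin (2 * n))).Nonempty := ⟨⟨0, by omega⟩, mem_univ _⟩
  have hT : (univ : Finset (Fin (2 * m))).Nonempty := ⟨⟨0, by omega⟩, mem_univ _⟩
  have hval := fun {I S} => integral_subPanelEst (I := I) (S := S) hL2 hvar horth
  rw [hval hN hT, hval hN (firstHalf_nonempty hm), hval hN (secondHalf_nonempty hm),
    hval (firstHalf_nonempty hn) hT, hval (secondHalf_nonempty hn) hT,
    hval (firstHalf_nonempty hn) (firstHalf_nonempty hm),
    hval (firstHalf_nonempty hn) (secondHalf_nonempty hm),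
    hval (secondHalf_nonempty hn) (firstHalf_nonempty hm),
    hval (secondHalf_nonempty hn) (secondHalf_nonempty hm)]
  simp only [card_univ, Fintype.card_fin, card_firstHalf, card_secondHalf]
  push_cast
  field_simp
  ring

/-- The higher-order split-panel jackknife estimator
`4·β̂_{N,T} − 2·β̃_{N,T/2} − 2·β̃_{N/2,T} + β̃_{N/2,T/2}` is exactly unbiased for `β`. -/
theorem higher_order_split_panel_jackknife_unbiased
    {Ω : Type*} [MeasurableSpace Ω] {P : Measure Ω} [IsProbabilityMeasure P]
    {n m : ℕ} (hn : 1 ≤ n) (hm : 1 ≤ m)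
    (β : ℝ) (α : Fin (2 * n) → ℝ) (γ : Fin (2 * m) → ℝ)
    (Y : Fin (2 * n) → Fin (2 * m) → Ω → ℝ)
    (hL2 : ∀ (i : Fin (2 * n)) (t : Fin (2 * m)),
      MemLp (fun ω => Y i t ω - α i - γ t) 2 P)
    (hmean : ∀ (i : Fin (2 * n)) (t : Fin (2 * m)),
      ∫ ω, (Y i t ω - α i - γ t) ∂P = 0)
    (hvar : ∀ (i : Fin (2 * n)) (t : Fin (2 * m)),
      ∫ ω, (Y i t ω - α i - γ t) ^ 2 ∂P = β)
    (horth : ∀ (i j : Fin (2 * n)) (t s : Fin (2 * m)), (i, t) ≠ (j, s) →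
      ∫ ω, (Y i t ω - α i - γ t) * (Y j s ω - α j - γ s) ∂P = 0) :
    ∫ ω, (4 * subPanelEst Y Finset.univ Finset.univ ω
        - 2 * ((subPanelEst Y Finset.univ (firstHalf m) ω
            + subPanelEst Y Finset.univ (secondHalf m) ω) / 2)
        - 2 * ((subPanelEst Y (firstHalf n) Finset.univ ω
            + subPanelEst Y (secondHalf n) Finset.univ ω) / 2)
        + (subPanelEst Y (firstHalf n) (firstHalf m) ω
            + subPanelEst Y (firstHalf n) (secondHalf m) ω
            + subPanelEst Y (secondHalf n) (firstHalf m) ω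
            + subPanelEst Y (secondHalf n) (secondHalf m) ω) / 4) ∂P
      = β :=
  higher_order_split_panel_jackknife_unbiased_general hn hm β α γ Y hL2 hvar horth
end

section
/- Let N, T be positive integers, let b_min, b_max be reals with 0 < b_min ≤ b_max, let h_{it} (i = 1,…,N; t = 1,…,T) satisfy b_min ≤ h_{it} ≤ b_max, and let b be a real with 0 < b ≤ b_min·(1 + (max(N,T)/min(N,T))·(b_max/b_min))^{-1}. Define the N×N matrix H_{αα} := diag(Σ_t h_{1t},…,Σ_t h_{Nt}) + b·1_N 1_Nᵀ, the N×T matrix H_{αγ} with entries (H_{αγ})_{it} := h_{it} − b, the T×T matrix H_{γγ} := diag(Σ_i h_{i1},…,Σ_i h_{iT}) + b·1_T 1_Tᵀ, and H_{γα} := H_{αγ}ᵀ. Then H_{αα} and H_{γγ} are invertible, and ‖H_{αα}^{-1} H_{αγ}‖_∞ < 1 − b/b_max and ‖H_{γγ}^{-1} H_{γα}‖_∞ < 1 − b/b_max, where ‖·‖_∞ denotes the maximum absolute row sum of a matrix. -/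
/-!
By the Sherman–Morrison formula, `(D + b·11ᵀ)⁻¹ = D⁻¹ - β·D⁻¹11ᵀD⁻¹` with `D = diag(d)`,
`d_i = Σ_t h_{it}` and `β = b / (1 + b Σ_k d_k⁻¹) ∈ (0, b]`. Hence the `(i, t)` entry of
`H_{αα}⁻¹ H_{αγ}` is `d_i⁻¹ (h_{it} - b - β u_t)` with `u_t = Σ_j d_j⁻¹ (h_{jt} - b)`.
The condition on `b` gives `β u_t ≤ b · N b_max / (T b_min) ≤ b_min - b`, so all entries are
nonnegative, and the `i`-th row sum is
`d_i⁻¹ (d_i - T b - β Σ_t u_t) < 1 - T b / d_i ≤ 1 - b / b_max`.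
The `γ`-blocks are the `α`-blocks of the transposed weights.
-/

/-- Maximum absolute row sum of a matrix (the `ℓ_∞`-induced matrix norm). -/
noncomputable def rowSumNorm {m n : ℕ} (A : Matrix (Fin m) (Fin n) ℝ) : ℝ :=
  ⨆ i, ∑ j, |A i j|

/-- The `αα`-block `diag(Σ_t h_{it}) + b·1_N 1_Nᵀ` of the penalized expected Hessian. -/
noncomputable def Haa {N T : ℕ} (w : Fin N → Fin T → ℝ) (b : ℝ) :
    Matrix (Fin N) (Fin N) ℝ :=
  Matrix.diagonal (fun i => ∑ t, w i t) + Matrix.of fun _ _ => b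

/-- The `αγ`-block with entries `h_{it} − b`. -/
noncomputable def Hag {N T : ℕ} (w : Fin N → Fin T → ℝ) (b : ℝ) :
    Matrix (Fin N) (Fin T) ℝ :=
  Matrix.of fun i t => w i t - b

/-- The `γγ`-block `diag(Σ_i h_{it}) + b·1_T 1_Tᵀ` of the penalized expected Hessian. -/
noncomputable def Hgg {N T : ℕ} (w : Fin N → Fin T → ℝ) (b : ℝ) :
    Matrix (Fin T) (Fin T) ℝ :=
  Matrix.diagonal (fun t => ∑ i, w i t) + Matrix.of fun _ _ => b

namespace Matrix

section Field

variable {ι K : Type*} [Fintype ι] [DecidableEq ι] [Field K]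

theorem diagonal_add_const_mul_eq_one {d : ι → K} (hd : ∀ i, d i ≠ 0) {b : K}
    (hc : 1 + b * ∑ k, (d k)⁻¹ ≠ 0) :
    (diagonal d + of fun _ _ => b) *
      (diagonal d⁻¹ - of fun i j => b / (1 + b * ∑ k, (d k)⁻¹) * ((d i)⁻¹ * (d j)⁻¹)) = 1 := by
  set c := ∑ k, (d k)⁻¹ with hc_def
  ext i j
  simp only [add_mul, add_apply, mul_apply, of_apply, sub_apply, diagonal_apply,
    Pi.inv_apply, mul_sub, Finset.sum_sub_distrib, Finset.sum_add_distrib, ite_mul, zero_mul,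
    mul_ite, mul_zero, Finset.sum_ite_eq', Finset.sum_ite_eq, Finset.mem_univ, if_true, one_apply,
    ← Finset.mul_sum, ← Finset.sum_mul, ← hc_def]
  have := hd i
  have := hd j
  split_ifs with hij
  · subst hij; field_simp; ring
  · field_simp; ring

theorem inv_diagonal_add_const_mul_apply {κ : Type*} {d : ι → K} (hd : ∀ i, d i ≠ 0) {b : K}
    (hc : 1 + b * ∑ k, (d k)⁻¹ ≠ 0) (X : Matrix ι κ K) (i : ι) (t : κ) :
    ((diagonal d + of fun _ _ => b : Matrix ι ι K)⁻¹ * X) i t =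
      (d i)⁻¹ * (X i t - b / (1 + b * ∑ k, (d k)⁻¹) * ∑ j, (d j)⁻¹ * X j t) := by
  rw [inv_eq_right_inv (diagonal_add_const_mul_eq_one hd hc)]
  simp only [sub_mul, sub_apply, mul_apply, of_apply, diagonal_apply, ite_mul, zero_mul,
    Finset.sum_sub_distrib, Finset.sum_ite_eq, Finset.mem_univ, if_true, Pi.inv_apply, mul_sub,
    Finset.mul_sum]
  congr 1
  exact Finset.sum_congr rfl fun j _ => by ring

end Field

section Ordered

variable {ι K : Type*} [Fintype ι] [Field K] [LinearOrder K] [IsStrictOrderedRing K]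
  {d : ι → K} {b : K}

theorem one_le_one_add_mul_sum_inv (hd : ∀ i, 0 ≤ d i) (hb : 0 ≤ b) :
    1 ≤ 1 + b * ∑ k, (d k)⁻¹ :=
  le_add_of_nonneg_right (mul_nonneg hb (Finset.sum_nonneg fun k _ => inv_nonneg.mpr (hd k)))

theorem isUnit_diagonal_add_const [DecidableEq ι] (hd : ∀ i, 0 < d i) (hb : 0 ≤ b) :
    IsUnit (diagonal d + of fun _ _ => b) :=
  (isUnit_iff_isUnit_det _).mpr <| isUnit_det_of_right_inverse <|
    diagonal_add_const_mul_eq_one (fun i => (hd i).ne')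
      (one_pos.trans_le (one_le_one_add_mul_sum_inv (fun i => (hd i).le) hb)).ne'

theorem exists_inv_diagonal_add_const_mul_apply [DecidableEq ι] {κ : Type*}
    (hd : ∀ i, 0 < d i) (hb : 0 < b) (X : Matrix ι κ K) :
    ∃ β, 0 < β ∧ β ≤ b ∧ ∀ i t, ((diagonal d + of fun _ _ => b : Matrix ι ι K)⁻¹ * X) i t =
      (d i)⁻¹ * (X i t - β * ∑ j, (d j)⁻¹ * X j t) := by
  have hc := one_le_one_add_mul_sum_inv (fun i => (hd i).le) hb.le
  have hc_pos := one_pos.trans_le hc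
  exact ⟨b / (1 + b * ∑ k, (d k)⁻¹), div_pos hb hc_pos, div_le_self hb.le hc,
    inv_diagonal_add_const_mul_apply (fun i => (hd i).ne') hc_pos.ne' X⟩

end Ordered

end Matrix

open Matrix

theorem rowSumNorm_lt {m n : ℕ} [NeZero m] {A : Matrix (Fin m) (Fin n) ℝ} {r : ℝ}
    (h : ∀ i, ∑ j, |A i j| < r) : rowSumNorm A < r := by
  obtain ⟨i, hi⟩ := exists_eq_ciSup_of_finite (f := fun i => ∑ j, |A i j|)
  rw [rowSumNorm, ← hi]
  exact h i

section HessianBlocks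

variable {N T : ℕ} {w : Fin N → Fin T → ℝ} {b bmin bmax : ℝ}

theorem natCast_mul_le_sum_weights (hlb : ∀ i t, bmin ≤ w i t) (i : Fin N) :
    T * bmin ≤ ∑ t, w i t := by
  simpa using Finset.card_nsmul_le_sum Finset.univ _ _ fun t _ => hlb i t

theorem sum_weights_le_natCast_mul (hub : ∀ i t, w i t ≤ bmax) (i : Fin N) :
    ∑ t, w i t ≤ T * bmax := by
  simpa using Finset.sum_le_card_nsmul Finset.univ _ _ fun t _ => hub i t

theorem sum_weights_pos [NeZero T] (hw : ∀ i t, 0 < w i t) (i : Fin N) : 0 < ∑ t, w i t :=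
  Finset.sum_pos (fun t _ => hw i t) Finset.univ_nonempty

theorem isUnit_Haa [NeZero T] (hw : ∀ i t, 0 < w i t) (hb : 0 ≤ b) : IsUnit (Haa w b) :=
  isUnit_diagonal_add_const (sum_weights_pos hw) hb

theorem Haa_inv_mul_Hag_nonneg [NeZero T] (hbmin : 0 < bmin) (hlb : ∀ i t, bmin ≤ w i t)
    (hub : ∀ i t, w i t ≤ bmax) (hb : 0 < b) (hb_le : b ≤ bmin)
    (hkey : b * N * bmax ≤ T * bmin * (bmin - b)) (i : Fin N) (t : Fin T) :
    0 ≤ ((Haa w b)⁻¹ * Hag w b) i t := by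
  have hT : (0 : ℝ) < T := Nat.cast_pos.mpr (NeZero.pos T)
  have hd_pos := sum_weights_pos fun i t => hbmin.trans_le (hlb i t)
  obtain ⟨β, -, hβb, hentry⟩ := exists_inv_diagonal_add_const_mul_apply hd_pos hb (Hag w b)
  set u := ∑ j, (∑ s, w j s)⁻¹ * Hag w b j t
  have hu_nonneg : 0 ≤ u := Finset.sum_nonneg fun j _ =>
    mul_nonneg (inv_pos.mpr (hd_pos j)).le (sub_nonneg.mpr (hb_le.trans (hlb j t)))
  have hu_le : u ≤ N * (bmax / (T * bmin)) := calc
    u ≤ ∑ _j : Fin N, bmax / (T * bmin) := Finset.sum_le_sum fun j _ => by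
      rw [div_eq_inv_mul]
      simp only [Hag, of_apply]
      exact mul_le_mul (inv_anti₀ (by positivity) (natCast_mul_le_sum_weights hlb j))
        (by linarith [hub j t]) (by linarith [hlb j t]) (by positivity)
    _ = N * (bmax / (T * bmin)) := by simp
  have hβu : β * u ≤ bmin - b := calc
    β * u ≤ b * (N * (bmax / (T * bmin))) := by gcongr
    _ = b * N * bmax / (T * bmin) := by ring
    _ ≤ bmin - b := by
      rw [div_le_iff₀ (by positivity)]
      linarith
  rw [Haa, hentry, show Hag w b i t = w i t - b from rfl]
  exact mul_nonneg (inv_pos.mpr (hd_pos i)).le (by linarith [hlb i t])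

theorem sum_Haa_inv_mul_Hag_lt [NeZero N] [NeZero T] (hlb : ∀ i t, bmin ≤ w i t)
    (hub : ∀ i t, w i t ≤ bmax) (hb : 0 < b) (hb_lt : b < bmin) (i : Fin N) :
    ∑ t, ((Haa w b)⁻¹ * Hag w b) i t < 1 - b / bmax := by
  have hw_pos (j : Fin N) (t : Fin T) : b < w j t := hb_lt.trans_le (hlb j t)
  have hbmax : 0 < bmax := hb.trans (hw_pos i 0) |>.trans_le (hub i 0)
  have hd_pos := sum_weights_pos fun j t => hb.trans (hw_pos j t)
  obtain ⟨β, hβ, -, hentry⟩ := exists_inv_diagonal_add_const_mul_apply hd_pos hb (Hag w b)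
  set d := ∑ s, w i s
  have hu_pos : 0 < ∑ t, ∑ j, (∑ s, w j s)⁻¹ * Hag w b j t :=
    Finset.sum_pos (fun t _ => Finset.sum_pos (fun j _ =>
      mul_pos (inv_pos.mpr (hd_pos j)) (sub_pos.mpr (hw_pos j t))) Finset.univ_nonempty)
      Finset.univ_nonempty
  have hrow : ∑ t, Hag w b i t = d - T * b := by simp [Hag, Finset.sum_sub_distrib, d]
  have hbd : b / bmax ≤ T * b / d := by
    rw [div_le_div_iff₀ hbmax (hd_pos i)]
    nlinarith [sum_weights_le_natCast_mul hub i]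
  calc ∑ t, ((Haa w b)⁻¹ * Hag w b) i t
      = d⁻¹ * (d - T * b - β * ∑ t, ∑ j, (∑ s, w j s)⁻¹ * Hag w b j t) := by
        simp only [Haa, hentry, ← Finset.mul_sum, Finset.sum_sub_distrib, hrow, d]
    _ < d⁻¹ * (d - T * b) :=
        mul_lt_mul_of_pos_left (by linarith [mul_pos hβ hu_pos]) (inv_pos.mpr (hd_pos i))
    _ = 1 - T * b / d := by rw [inv_mul_eq_div, sub_div, div_self (hd_pos i).ne']
    _ ≤ 1 - b / bmax := by linarith

theorem rowSumNorm_Haa_inv_mul_Hag_lt [NeZero N] [NeZero T] (hbmin : 0 < bmin)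
    (hlb : ∀ i t, bmin ≤ w i t) (hub : ∀ i t, w i t ≤ bmax) (hb : 0 < b)
    (hkey : b * N * bmax ≤ T * bmin * (bmin - b)) :
    rowSumNorm ((Haa w b)⁻¹ * Hag w b) < 1 - b / bmax := by
  have hbmax : 0 < bmax := hbmin.trans_le ((hlb 0 0).trans (hub 0 0))
  have hb_lt : b < bmin := by
    have : 0 < b * N * bmax := by have := NeZero.pos N; positivity
    have : 0 < T * bmin * (bmin - b) := by linarith
    exact sub_pos.mp (pos_of_mul_pos_right this (by have := NeZero.pos T; positivity))
  have hnonneg := Haa_inv_mul_Hag_nonneg hbmin hlb hub hb hb_lt.le hkey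
  refine rowSumNorm_lt fun i => ?_
  simpa only [abs_of_nonneg (hnonneg i _)] using sum_Haa_inv_mul_Hag_lt hlb hub hb hb_lt i

end HessianBlocks

theorem mul_natCast_mul_le_of_le_penalty {n n' : ℕ} (hn : 0 < n) (hn' : 0 < n')
    {bmin bmax b : ℝ} (hbmin : 0 < bmin) (hbmax : 0 ≤ bmax) (hb : 0 ≤ b)
    (hble : b ≤ bmin * (1 + ((max n n' : ℕ) : ℝ) / ((min n n' : ℕ) : ℝ) * (bmax / bmin))⁻¹) :
    b * n * bmax ≤ n' * bmin * (bmin - b) := by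
  set M : ℝ := ((max n n' : ℕ) : ℝ)
  set m : ℝ := ((min n n' : ℕ) : ℝ)
  have hm : 0 < m := Nat.cast_pos.mpr (lt_min hn hn')
  have hnM : (n : ℝ) ≤ M := Nat.cast_le.mpr (le_max_left n n')
  have hmn' : m ≤ n' := Nat.cast_le.mpr (min_le_right n n')
  have hmM : m ≤ M := Nat.cast_le.mpr min_le_max
  have hble' : b * m * bmin + b * M * bmax ≤ m * bmin * bmin := by
    have h := (le_mul_inv_iff₀ (by positivity)).mp hble
    have h' := mul_le_mul_of_nonneg_right h (mul_pos hm hbmin).le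
    have e : b * (1 + M / m * (bmax / bmin)) * (m * bmin) = b * m * bmin + b * M * bmax := by
      field_simp
    linarith
  have hb_le : b ≤ bmin := by
    refine le_of_mul_le_mul_right ?_ (mul_pos hm hbmin)
    linarith [mul_nonneg (mul_nonneg hb (hm.le.trans hmM)) hbmax]
  calc b * n * bmax ≤ b * M * bmax := by gcongr
    _ ≤ m * bmin * (bmin - b) := by linarith
    _ ≤ n' * bmin * (bmin - b) := by gcongr

/-- For weights `b_min ≤ h_{it} ≤ b_max` and penalty
`0 < b ≤ b_min·(1 + (max(N,T)/min(N,T))·(b_max/b_min))⁻¹`, the diagonal blocks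
are invertible and `‖H_{αα}⁻¹ H_{αγ}‖_∞ < 1 − b/b_max`,
`‖H_{γγ}⁻¹ H_{γα}‖_∞ < 1 − b/b_max`. -/
theorem hessian_block_contraction {N T : ℕ} (hN : 0 < N) (hT : 0 < T)
    (bmin bmax b : ℝ) (hbmin : 0 < bmin) (hbb : bmin ≤ bmax)
    (w : Fin N → Fin T → ℝ)
    (hlb : ∀ i t, bmin ≤ w i t) (hub : ∀ i t, w i t ≤ bmax)
    (hb0 : 0 < b)
    (hble : b ≤ bmin * (1 + ((max N T : ℕ) : ℝ) / ((min N T : ℕ) : ℝ) * (bmax / bmin))⁻¹) :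
    IsUnit (Haa w b) ∧ IsUnit (Hgg w b) ∧
      rowSumNorm ((Haa w b)⁻¹ * Hag w b) < 1 - b / bmax ∧
      rowSumNorm ((Hgg w b)⁻¹ * (Hag w b).transpose) < 1 - b / bmax := by
  have : NeZero N := NeZero.of_pos hN
  have : NeZero T := NeZero.of_pos hT
  have hbmax : 0 ≤ bmax := (hbmin.trans_le hbb).le
  have hw_pos (i : Fin N) (t : Fin T) : 0 < w i t := hbmin.trans_le (hlb i t)
  have hkey := mul_natCast_mul_le_of_le_penalty hN hT hbmin hbmax hb0.le hble
  have hkey' := mul_natCast_mul_le_of_le_penalty hT hN hbmin hbmax hb0.le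
    (by rwa [max_comm, min_comm])
  exact ⟨isUnit_Haa hw_pos hb0.le, isUnit_Haa (fun t i => hw_pos i t) hb0.le,
    rowSumNorm_Haa_inv_mul_Hag_lt hbmin hlb hub hb0 hkey,
    rowSumNorm_Haa_inv_mul_Hag_lt (w := fun t i => w i t) hbmin (fun t i => hlb i t)
      (fun t i => hub i t) hb0 hkey'⟩
end

section
/- Let A be a symmetric n×n real matrix and let v ∈ ℝⁿ be a nonzero vector with A v = 0. Let c₁ and c₂ be nonzero real numbers, and suppose that A + c₁·v vᵀ is invertible. Then A + c₂·v vᵀ is invertible and (A + c₁·v vᵀ)^{-1} − (A + c₂·v vᵀ)^{-1} = (1/c₁ − 1/c₂)·‖v‖^{-4}·v vᵀ, where ‖v‖ denotes the Euclidean norm of v. -/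
/-- Let `A` be a symmetric real matrix, `v ≠ 0` with `A v = 0`, and `c₁, c₂ ≠ 0`. If
`A + c₁·v vᵀ` is invertible, then so is `A + c₂·v vᵀ`, and
`(A + c₁·v vᵀ)⁻¹ − (A + c₂·v vᵀ)⁻¹ = (1/c₁ − 1/c₂)·‖v‖⁻⁴·v vᵀ`. -/
theorem rank_one_penalty_inverse_difference {n : ℕ}
    (A : Matrix (Fin n) (Fin n) ℝ) (hA : A.IsSymm)
    (v : Fin n → ℝ) (hv : v ≠ 0) (hAv : A.mulVec v = 0)
    (c₁ c₂ : ℝ) (hc₁ : c₁ ≠ 0) (hc₂ : c₂ ≠ 0)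
    (hU : IsUnit (A + c₁ • Matrix.vecMulVec v v)) :
    IsUnit (A + c₂ • Matrix.vecMulVec v v) ∧
      (A + c₁ • Matrix.vecMulVec v v)⁻¹ - (A + c₂ • Matrix.vecMulVec v v)⁻¹
        = ((1 / c₁ - 1 / c₂) * (Real.sqrt (∑ i, v i ^ 2) ^ 4)⁻¹) •
            Matrix.vecMulVec v v := by
  classical
  set V := Matrix.vecMulVec v v with hVdef
  set s : ℝ := ∑ i, v i ^ 2 with hsdef
  have hs0 : 0 < s := by
    obtain ⟨i, hi⟩ := Function.ne_iff.mp hv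
    exact Finset.sum_pos' (fun j _ => sq_nonneg _)
      ⟨i, Finset.mem_univ i, lt_of_le_of_ne (sq_nonneg _) (Ne.symm (pow_ne_zero 2 hi))⟩
  have hsne : s ≠ 0 := ne_of_gt hs0
  -- A * V = 0
  have hAV : A * V = 0 := by
    ext i j
    have h0 : A.mulVec v i = 0 := congrFun hAv i
    simp only [Matrix.mulVec, dotProduct] at h0
    simp only [Matrix.mul_apply, hVdef, Matrix.vecMulVec_apply, Matrix.zero_apply]
    calc ∑ k, A i k * (v k * v j) = (∑ k, A i k * v k) * v j := by
          rw [Finset.sum_mul]; exact Finset.sum_congr rfl fun k _ => by ring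
      _ = 0 := by rw [h0, zero_mul]
  -- V * A = 0
  have hVA : V * A = 0 := by
    ext i j
    have h0 : A.mulVec v j = 0 := congrFun hAv j
    simp only [Matrix.mulVec, dotProduct] at h0
    simp only [Matrix.mul_apply, hVdef, Matrix.vecMulVec_apply, Matrix.zero_apply]
    have hsym : ∀ k, A k j = A j k := fun k => by
      conv_lhs => rw [← hA]
      rfl
    calc ∑ k, v i * v k * A k j = v i * ∑ k, A j k * v k := by
          rw [Finset.mul_sum]; exact Finset.sum_congr rfl fun k _ => by rw [hsym k]; ring
      _ = 0 := by rw [h0, mul_zero]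
  -- V * V = s • V
  have hVV : V * V = s • V := by
    ext i j
    simp only [Matrix.mul_apply, hVdef, Matrix.vecMulVec_apply, Matrix.smul_apply,
      smul_eq_mul, hsdef]
    rw [Finset.sum_mul]
    exact Finset.sum_congr rfl fun k _ => by ring
  set M₁ := A + c₁ • V with hM₁
  set M₂ := A + c₂ • V with hM₂
  have hM1V : M₁ * V = (c₁ * s) • V := by
    rw [hM₁, Matrix.add_mul, hAV, Matrix.smul_mul, hVV, zero_add, smul_smul]
  have hM2V : M₂ * V = (c₂ * s) • V := by
    rw [hM₂, Matrix.add_mul, hAV, Matrix.smul_mul, hVV, zero_add, smul_smul]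
  have hVM1 : V * M₁ = (c₁ * s) • V := by
    rw [hM₁, Matrix.mul_add, hVA, Matrix.mul_smul, hVV, zero_add, smul_smul]
  have hdet : IsUnit M₁.det := (Matrix.isUnit_iff_isUnit_det _).mp hU
  set B := M₁⁻¹ with hBdef
  have hBM : B * M₁ = 1 := Matrix.nonsing_inv_mul _ hdet
  have hMB : M₁ * B = 1 := Matrix.mul_nonsing_inv _ hdet
  have hc₁s : c₁ * s ≠ 0 := mul_ne_zero hc₁ hsne
  have hBV : B * V = (c₁ * s)⁻¹ • V := by
    have h1 : B * (M₁ * V) = V := by rw [← Matrix.mul_assoc, hBM, Matrix.one_mul]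
    rw [hM1V, Matrix.mul_smul] at h1
    calc B * V = (c₁ * s)⁻¹ • ((c₁ * s) • (B * V)) := by
          rw [smul_smul, inv_mul_cancel₀ hc₁s, one_smul]
      _ = (c₁ * s)⁻¹ • V := by rw [h1]
  have hVB : V * B = (c₁ * s)⁻¹ • V := by
    have h1 : (V * M₁) * B = V := by rw [Matrix.mul_assoc, hMB, Matrix.mul_one]
    rw [hVM1, Matrix.smul_mul] at h1
    calc V * B = (c₁ * s)⁻¹ • ((c₁ * s) • (V * B)) := by
          rw [smul_smul, inv_mul_cancel₀ hc₁s, one_smul]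
      _ = (c₁ * s)⁻¹ • V := by rw [h1]
  set d : ℝ := (1 / c₁ - 1 / c₂) * (s ^ 2)⁻¹ with hddef
  set C := B - d • V with hCdef
  have hM2split : M₂ = M₁ + (c₂ - c₁) • V := by
    rw [hM₁, hM₂, sub_smul]; abel
  have hM2C : M₂ * C = 1 := by
    have expand : M₂ * C =
        1 + (-(d * (c₁ * s)) + (c₂ - c₁) * (c₁ * s)⁻¹ - (c₂ - c₁) * d * s) • V := by
      rw [hCdef, hM2split]
      simp only [Matrix.add_mul, Matrix.mul_sub, Matrix.smul_mul, Matrix.mul_smul,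
        hMB, hM1V, hVB, hVV, smul_smul]
      module
    have hcoef : -(d * (c₁ * s)) + (c₂ - c₁) * (c₁ * s)⁻¹ - (c₂ - c₁) * d * s = 0 := by
      rw [hddef]; field_simp; ring
    rw [expand, hcoef, zero_smul, add_zero]
  have hUnit2 : IsUnit M₂ := by
    have : Invertible M₂ := invertibleOfRightInverse _ _ hM2C
    exact isUnit_of_invertible M₂
  refine ⟨hUnit2, ?_⟩
  have hinv2 : M₂⁻¹ = C := Matrix.inv_eq_right_inv hM2C
  have hsqrt : Real.sqrt s ^ 4 = s ^ 2 := by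
    have h2 : Real.sqrt s ^ 2 = s := Real.sq_sqrt hs0.le
    calc Real.sqrt s ^ 4 = (Real.sqrt s ^ 2) ^ 2 := by ring
      _ = s ^ 2 := by rw [h2]
  rw [hinv2, hCdef, hsqrt, sub_sub_cancel, hddef]
end

section
/- Let A and B be N×T real matrices, let (α^A, γ^A) solve the h-weighted normal equations for A, and let (α^B, γ^B) solve the h-weighted normal equations for B. Then 𝒜ᵀ H̄^{-1} ℬ = (NT)^{-3/2} · Σ_{i,t} (α^A_i + γ^A_t)·B_{it} = (NT)^{-3/2} · Σ_{i,t} (α^B_i + γ^B_t)·A_{it}. -/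
/-!
Shifting a solution `(α, γ)` of the normal equations to `(α - c, γ + c)` leaves every
`α i + γ t` unchanged, and a suitable `c` makes `u = (α, γ)` orthogonal to `v`. Then `b • v vᵀ`
kills `u`, while `M u = (X 1_T ; Xᵀ 1_N)` is exactly the normal equations, so
`H̄⁻¹ 𝒳 = (NT)^{-1/2} u`. Pairing with the other score vector gives
`u ⬝ᵥ (Y 1_T ; Yᵀ 1_N) = Σ_{i,t} (α i + γ t) Y i t`, and the symmetry of `H̄` lets either factor
be inverted, which gives the two formulas.
-/

open Matrix

/-- The penalized expected incidental-parameter Hessian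
`H̄ = (NT)^{-1/2}·(M + b·v vᵀ)` with `v = (1_N', −1_T')'`. -/
noncomputable def Hbar {N T : ℕ} (w : Fin N → Fin T → ℝ) (b : ℝ) :
    Matrix (Fin N ⊕ Fin T) (Fin N ⊕ Fin T) ℝ :=
  (Real.sqrt ((N : ℝ) * T))⁻¹ •
    (Matrix.fromBlocks (Matrix.diagonal fun i => ∑ t, w i t) (Matrix.of fun i t => w i t)
        (Matrix.of fun t i => w i t) (Matrix.diagonal fun t => ∑ i, w i t)
      + b • Matrix.vecMulVec (Sum.elim (fun _ => (1 : ℝ)) fun _ => -1)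
          (Sum.elim (fun _ => (1 : ℝ)) fun _ => -1))

/-- The vector `𝒳 = (NT)^{-1}·(X 1_T ; Xᵀ 1_N)` associated to an `N×T` matrix `X`. -/
noncomputable def scoreVec {N T : ℕ} (X : Matrix (Fin N) (Fin T) ℝ) :
    Fin N ⊕ Fin T → ℝ :=
  ((N : ℝ) * T)⁻¹ • Sum.elim (fun i => ∑ t, X i t) fun t => ∑ i, X i t

open Finset

namespace Matrix

variable {n α : Type*} [Fintype n] [DecidableEq n] [CommRing α] {H : Matrix n n α}

lemma dotProduct_inv_mulVec_of_mulVec_eq (hH : IsUnit H) {u y : n → α} (hu : H *ᵥ u = y)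
    (x : n → α) : x ⬝ᵥ H⁻¹ *ᵥ y = x ⬝ᵥ u := by
  let := hH.invertible
  rw [inv_mulVec_eq_vec hu.symm]

lemma IsSymm.dotProduct_inv_mulVec_of_mulVec_eq (hS : H.IsSymm) (hH : IsUnit H) {u x : n → α}
    (hu : H *ᵥ u = x) (y : n → α) : x ⬝ᵥ H⁻¹ *ᵥ y = u ⬝ᵥ y := by
  rw [dotProduct_mulVec, ← mulVec_transpose, hS.inv.eq, dotProduct_comm,
    Matrix.dotProduct_inv_mulVec_of_mulVec_eq hH hu, dotProduct_comm]

end Matrix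

section TwoWay

variable {ι κ : Type*} [Fintype ι] [Fintype κ]

def twoWayGram [DecidableEq ι] [DecidableEq κ] (w : ι → κ → ℝ) : Matrix (ι ⊕ κ) (ι ⊕ κ) ℝ :=
  fromBlocks (diagonal fun i => ∑ t, w i t) (of w) (of fun t i => w i t)
    (diagonal fun t => ∑ i, w i t)

def signVec : ι ⊕ κ → ℝ := Sum.elim (fun _ => 1) fun _ => -1

def penalizedGram [DecidableEq ι] [DecidableEq κ] (w : ι → κ → ℝ) (b : ℝ) :
    Matrix (ι ⊕ κ) (ι ⊕ κ) ℝ :=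
  twoWayGram w + b • vecMulVec signVec signVec

def marginalSums (X : Matrix ι κ ℝ) : ι ⊕ κ → ℝ :=
  Sum.elim (fun i => ∑ t, X i t) fun t => ∑ i, X i t

lemma isSymm_twoWayGram [DecidableEq ι] [DecidableEq κ] (w : ι → κ → ℝ) : (twoWayGram w).IsSymm :=
  .fromBlocks (isSymm_diagonal _) rfl (isSymm_diagonal _)

lemma twoWayGram_mulVec_sumElim [DecidableEq ι] [DecidableEq κ] (w : ι → κ → ℝ) (α : ι → ℝ)
    (γ : κ → ℝ) :
    twoWayGram w *ᵥ Sum.elim α γ =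
      Sum.elim (fun i => ∑ t, w i t * (α i + γ t)) fun t => ∑ i, w i t * (α i + γ t) := by
  ext (i | t) <;>
    simp [twoWayGram, mulVec, dotProduct, diagonal_apply, mul_add, sum_add_distrib, mul_sum,
      mul_comm]

lemma signVec_dotProduct_sumElim (α : ι → ℝ) (γ : κ → ℝ) :
    signVec ⬝ᵥ Sum.elim α γ = ∑ i, α i - ∑ t, γ t := by
  simp [signVec, dotProduct, sub_eq_add_neg]

lemma sumElim_dotProduct_marginalSums (α : ι → ℝ) (γ : κ → ℝ) (X : Matrix ι κ ℝ) :
    Sum.elim α γ ⬝ᵥ marginalSums X = ∑ i, ∑ t, (α i + γ t) * X i t := by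
  simp only [marginalSums, dotProduct, Fintype.sum_sum_type, Sum.elim_inl, Sum.elim_inr,
    mul_sum, add_mul, sum_add_distrib]
  rw [sum_comm (s := univ (α := κ))]

/-- Two-way effects are only determined up to a common shift `α - c, γ + c`; this picks the one
orthogonal to `signVec`, which the penalty term `b • vecMulVec signVec signVec` then ignores. -/
lemma exists_shift_signVec_dotProduct_eq_zero (α : ι → ℝ) (γ : κ → ℝ) :
    ∃ c : ℝ, signVec ⬝ᵥ Sum.elim (fun i => α i - c) (fun t => γ t + c) = 0 := by
  have hempty : (Fintype.card ι + Fintype.card κ : ℝ) = 0 → ∑ i, α i - ∑ t, γ t = 0 := by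
    intro h
    obtain ⟨hι, hκ⟩ : Fintype.card ι = 0 ∧ Fintype.card κ = 0 := by
      exact_mod_cast add_eq_zero_iff_of_nonneg (Nat.cast_nonneg _) (Nat.cast_nonneg _) |>.1 h
    rw [Fintype.card_eq_zero_iff] at hι hκ
    simp
  refine ⟨(∑ i, α i - ∑ t, γ t) / (Fintype.card ι + Fintype.card κ), ?_⟩
  rw [signVec_dotProduct_sumElim, sub_eq_zero]
  simp only [sum_sub_distrib, sum_add_distrib, sum_const, card_univ, nsmul_eq_mul]
  linear_combination (mul_div_cancel_of_imp' hempty).symm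

lemma penalizedGram_mulVec_sumElim [DecidableEq ι] [DecidableEq κ] (w : ι → κ → ℝ) (b : ℝ)
    {X : Matrix ι κ ℝ} {α : ι → ℝ} {γ : κ → ℝ}
    (hrow : ∀ i, ∑ t, w i t * (α i + γ t) = ∑ t, X i t)
    (hcol : ∀ t, ∑ i, w i t * (α i + γ t) = ∑ i, X i t)
    (hsign : signVec ⬝ᵥ Sum.elim α γ = 0) :
    penalizedGram w b *ᵥ Sum.elim α γ = marginalSums X := by
  rw [penalizedGram, add_mulVec, smul_mulVec, vecMulVec_mulVec, hsign, twoWayGram_mulVec_sumElim]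
  simp [marginalSums, hrow, hcol]

lemma exists_penalizedGram_mulVec_eq_marginalSums [DecidableEq ι] [DecidableEq κ]
    (w : ι → κ → ℝ) (b : ℝ) {X : Matrix ι κ ℝ} {α : ι → ℝ} {γ : κ → ℝ}
    (hrow : ∀ i, ∑ t, w i t * (α i + γ t) = ∑ t, X i t)
    (hcol : ∀ t, ∑ i, w i t * (α i + γ t) = ∑ i, X i t) :
    ∃ u : ι ⊕ κ → ℝ, penalizedGram w b *ᵥ u = marginalSums X ∧
      ∀ Y : Matrix ι κ ℝ, u ⬝ᵥ marginalSums Y = ∑ i, ∑ t, (α i + γ t) * Y i t := by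
  obtain ⟨c, hc⟩ := exists_shift_signVec_dotProduct_eq_zero α γ
  have hshift : ∀ i t, α i - c + (γ t + c) = α i + γ t := fun _ _ => by ring
  refine ⟨_, penalizedGram_mulVec_sumElim w b (by simpa only [hshift]) (by simpa only [hshift]) hc,
    fun Y => ?_⟩
  simp only [sumElim_dotProduct_marginalSums, hshift]

end TwoWay

lemma Hbar_eq {N T : ℕ} (w : Fin N → Fin T → ℝ) (b : ℝ) :
    Hbar w b = (Real.sqrt ((N : ℝ) * T))⁻¹ • penalizedGram w b :=
  rfl

lemma scoreVec_eq {N T : ℕ} (X : Matrix (Fin N) (Fin T) ℝ) :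
    scoreVec X = ((N : ℝ) * T)⁻¹ • marginalSums X :=
  rfl

lemma isSymm_Hbar {N T : ℕ} (w : Fin N → Fin T → ℝ) (b : ℝ) : (Hbar w b).IsSymm :=
  ((isSymm_twoWayGram w).add (by simp [IsSymm])).smul _

lemma Hbar_mulVec_inv_sqrt_smul {N T : ℕ} (w : Fin N → Fin T → ℝ) (b : ℝ)
    {X : Matrix (Fin N) (Fin T) ℝ} {u : Fin N ⊕ Fin T → ℝ}
    (hu : penalizedGram w b *ᵥ u = marginalSums X) :
    Hbar w b *ᵥ ((Real.sqrt ((N : ℝ) * T))⁻¹ • u) = scoreVec X := by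
  rw [Hbar_eq, mulVec_smul, smul_mulVec, hu, smul_smul, ← mul_inv,
    Real.mul_self_sqrt (by positivity), scoreVec_eq]

theorem projection_formula_dotProduct_general {N T : ℕ}
    (w : Fin N → Fin T → ℝ) (b : ℝ)
    (hH : IsUnit (Hbar w b))
    (A B : Matrix (Fin N) (Fin T) ℝ)
    (αA : Fin N → ℝ) (γA : Fin T → ℝ)
    (hA1 : ∀ i, ∑ t, w i t * (αA i + γA t) = ∑ t, A i t)
    (hA2 : ∀ t, ∑ i, w i t * (αA i + γA t) = ∑ i, A i t)
    (αB : Fin N → ℝ) (γB : Fin T → ℝ)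
    (hB1 : ∀ i, ∑ t, w i t * (αB i + γB t) = ∑ t, B i t)
    (hB2 : ∀ t, ∑ i, w i t * (αB i + γB t) = ∑ i, B i t) :
    scoreVec A ⬝ᵥ (Hbar w b)⁻¹.mulVec (scoreVec B)
        = (Real.sqrt ((N : ℝ) * T) ^ 3)⁻¹ * ∑ i, ∑ t, (αA i + γA t) * B i t ∧
      scoreVec A ⬝ᵥ (Hbar w b)⁻¹.mulVec (scoreVec B)
        = (Real.sqrt ((N : ℝ) * T) ^ 3)⁻¹ * ∑ i, ∑ t, (αB i + γB t) * A i t := by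
  set s := Real.sqrt ((N : ℝ) * T)
  have hs : (s ^ 3)⁻¹ = s⁻¹ * ((N : ℝ) * T)⁻¹ := by
    rw [pow_succ', sq, Real.mul_self_sqrt (by positivity), mul_inv]
  obtain ⟨uA, hKA, huA⟩ := exists_penalizedGram_mulVec_eq_marginalSums w b hA1 hA2
  obtain ⟨uB, hKB, huB⟩ := exists_penalizedGram_mulVec_eq_marginalSums w b hB1 hB2
  constructor
  · rw [(isSymm_Hbar w b).dotProduct_inv_mulVec_of_mulVec_eq hH (Hbar_mulVec_inv_sqrt_smul w b hKA),
      scoreVec_eq, smul_dotProduct, dotProduct_smul, huA, hs, smul_eq_mul, smul_eq_mul]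
    ring
  · rw [dotProduct_inv_mulVec_of_mulVec_eq hH (Hbar_mulVec_inv_sqrt_smul w b hKB),
      scoreVec_eq, smul_dotProduct, dotProduct_smul, dotProduct_comm, huB, hs, smul_eq_mul,
      smul_eq_mul]
    ring

/-- If `(α^A, γ^A)` and `(α^B, γ^B)` solve the `h`-weighted normal equations for `A` and
`B`, then `𝒜ᵀ H̄⁻¹ ℬ = (NT)^{-3/2}·Σ_{i,t}(α^A_i + γ^A_t)·B_{it}
= (NT)^{-3/2}·Σ_{i,t}(α^B_i + γ^B_t)·A_{it}`. -/
theorem projection_formula_dotProduct {N T : ℕ} (hN : 0 < N) (hT : 0 < T)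
    (w : Fin N → Fin T → ℝ) (hw : ∀ i t, 0 < w i t) (b : ℝ) (hb : 0 < b)
    (hH : IsUnit (Hbar w b))
    (A B : Matrix (Fin N) (Fin T) ℝ)
    (αA : Fin N → ℝ) (γA : Fin T → ℝ)
    (hA1 : ∀ i, ∑ t, w i t * (αA i + γA t) = ∑ t, A i t)
    (hA2 : ∀ t, ∑ i, w i t * (αA i + γA t) = ∑ i, A i t)
    (αB : Fin N → ℝ) (γB : Fin T → ℝ)
    (hB1 : ∀ i, ∑ t, w i t * (αB i + γB t) = ∑ t, B i t)
    (hB2 : ∀ t, ∑ i, w i t * (αB i + γB t) = ∑ i, B i t) :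
    scoreVec A ⬝ᵥ (Hbar w b)⁻¹.mulVec (scoreVec B)
        = (Real.sqrt ((N : ℝ) * T) ^ 3)⁻¹ * ∑ i, ∑ t, (αA i + γA t) * B i t ∧
      scoreVec A ⬝ᵥ (Hbar w b)⁻¹.mulVec (scoreVec B)
        = (Real.sqrt ((N : ℝ) * T) ^ 3)⁻¹ * ∑ i, ∑ t, (αB i + γB t) * A i t :=
  projection_formula_dotProduct_general w b hH A B αA γA hA1 hA2 αB γB hB1 hB2
end

section
/- Let N, T be positive integers, let e be an N×T real matrix, and let s_1,…,s_N be nonnegative reals. Define the symmetric N×N matrix η by η_{ij} := T^{-1/2}·(Σ_{t=1}^T e_{it} e_{jt} − T·δ_{ij}·s_i), where δ_{ij} is the Kronecker delta. Then the spectral norm of e satisfies ‖e‖⁸ ≤ 3·T²·Σ_{i,j=1}^N (Σ_{k=1}^N η_{ik} η_{jk})² + 12·T³·Σ_{i,j=1}^N s_i²·η_{ij}² + 3·T⁴·Σ_{i=1}^N s_i⁴. -/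
/-- The spectral norm (largest singular value) of an `N×T` real matrix: the operator
norm of `x ↦ e x` between Euclidean spaces. -/
noncomputable def specNorm {N T : ℕ} (e : Matrix (Fin N) (Fin T) ℝ) : ℝ :=
  ‖LinearMap.toContinuousLinearMap (Matrix.toEuclideanLin e)‖

/-- The matrix `η_{ij} = T^{-1/2}·(Σ_t e_{it}e_{jt} − T·δ_{ij}·s_i)`. -/
noncomputable def etaMat {N T : ℕ} (e : Matrix (Fin N) (Fin T) ℝ) (s : Fin N → ℝ)
    (i j : Fin N) : ℝ :=
  (Real.sqrt T)⁻¹ * (∑ t, e i t * e j t - (T : ℝ) * (if i = j then s i else 0))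

/-!
Since `e eᵀ` is symmetric, `‖e‖⁸ = ‖e eᵀ‖⁴ = ‖(e eᵀ)²‖²`, and the operator norm is dominated
by the Frobenius norm. Writing `e eᵀ = √T η + T D` with `D = diag s`, the `(i, j)` entry of
`(e eᵀ)²` is `T (η²)ᵢⱼ + T √T (sᵢ + sⱼ) ηᵢⱼ + T² δᵢⱼ sᵢ²`; bound its square by
`(x + y + z)² ≤ 3 (x² + y² + z²)` and use `(sᵢ + sⱼ)² ≤ 2 (sᵢ² + sⱼ²)` with the symmetry of `η`.
-/

open Matrix
open scoped Matrix.Norms.L2Operator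

namespace Matrix

variable {m n : Type*} [Fintype m] [Fintype n]

theorem sum_sq_add_mul_sq_le_of_isSymm {H : Matrix n n ℝ} (hH : H.IsSymm) (s : n → ℝ) :
    ∑ i, ∑ j, ((s i + s j) * H i j) ^ 2 ≤ 4 * ∑ i, ∑ j, s i ^ 2 * H i j ^ 2 := by
  have hswap : ∑ i, ∑ j, s j ^ 2 * H i j ^ 2 = ∑ i, ∑ j, s i ^ 2 * H i j ^ 2 := by
    rw [Finset.sum_comm]
    simp only [hH.apply]
  calc ∑ i, ∑ j, ((s i + s j) * H i j) ^ 2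
      ≤ ∑ i, ∑ j, 2 * (s i ^ 2 * H i j ^ 2 + s j ^ 2 * H i j ^ 2) := by
        gcongr with i _ j _
        nlinarith [sq_nonneg ((s i - s j) * H i j)]
    _ = 4 * ∑ i, ∑ j, s i ^ 2 * H i j ^ 2 := by
        simp only [← Finset.mul_sum, Finset.sum_add_distrib, hswap]
        ring

variable [DecidableEq n]

theorem mul_self_smul_add_smul_diagonal_apply {H : Matrix n n ℝ} (hH : H.IsSymm) (s : n → ℝ)
    (a b : ℝ) (i j : n) :
    ((a • H + b • diagonal s) * (a • H + b • diagonal s)) i j =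
      a ^ 2 * ∑ k, H i k * H j k + a * b * ((s i + s j) * H i j)
        + b ^ 2 * (if i = j then s i ^ 2 else 0) := by
  have hHH : (H * H) i j = ∑ k, H i k * H j k := by
    rw [mul_apply]
    exact Finset.sum_congr rfl fun k _ => by rw [hH.apply j k]
  simp only [add_mul, mul_add, Matrix.smul_mul, Matrix.mul_smul, diagonal_mul, mul_diagonal,
    diagonal_mul_diagonal, add_apply, smul_apply, diagonal_apply, smul_eq_mul, hHH]
  split_ifs <;> ring

theorem sum_sq_mul_self_smul_add_smul_diagonal_le {H : Matrix n n ℝ} (hH : H.IsSymm)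
    (s : n → ℝ) (a b : ℝ) :
    ∑ i, ∑ j, ((a • H + b • diagonal s) * (a • H + b • diagonal s)) i j ^ 2 ≤
      3 * a ^ 4 * ∑ i, ∑ j, (∑ k, H i k * H j k) ^ 2
        + 12 * a ^ 2 * b ^ 2 * ∑ i, ∑ j, s i ^ 2 * H i j ^ 2
        + 3 * b ^ 4 * ∑ i, s i ^ 4 := by
  have three_sq (x y z : ℝ) : (x + y + z) ^ 2 ≤ 3 * (x ^ 2 + y ^ 2 + z ^ 2) := by
    nlinarith [sq_nonneg (x - y), sq_nonneg (y - z), sq_nonneg (x - z)]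
  have hcross := mul_le_mul_of_nonneg_left (sum_sq_add_mul_sq_le_of_isSymm hH s)
    (by positivity : (0 : ℝ) ≤ 3 * a ^ 2 * b ^ 2)
  calc ∑ i, ∑ j, ((a • H + b • diagonal s) * (a • H + b • diagonal s)) i j ^ 2
      ≤ ∑ i, ∑ j, 3 * ((a ^ 2 * ∑ k, H i k * H j k) ^ 2 + (a * b * ((s i + s j) * H i j)) ^ 2
          + (b ^ 2 * (if i = j then s i ^ 2 else 0)) ^ 2) := by
        gcongr with i _ j _
        rw [mul_self_smul_add_smul_diagonal_apply hH]
        exact three_sq ..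
    _ = ∑ i, ∑ j, (3 * a ^ 4 * (∑ k, H i k * H j k) ^ 2
          + 3 * a ^ 2 * b ^ 2 * ((s i + s j) * H i j) ^ 2
          + 3 * b ^ 4 * (if i = j then s i ^ 4 else 0)) := by
        refine Finset.sum_congr rfl fun i _ => Finset.sum_congr rfl fun j _ => ?_
        split_ifs <;> ring
    _ = 3 * a ^ 4 * ∑ i, ∑ j, (∑ k, H i k * H j k) ^ 2
          + 3 * a ^ 2 * b ^ 2 * ∑ i, ∑ j, ((s i + s j) * H i j) ^ 2
          + 3 * b ^ 4 * ∑ i, s i ^ 4 := by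
        simp only [Finset.sum_add_distrib, ← Finset.mul_sum, Finset.sum_ite_eq, Finset.mem_univ,
          if_true]
    _ ≤ _ := by linarith

theorem l2_opNorm_sq_le_sum_sq (M : Matrix m n ℝ) : ‖M‖ ^ 2 ≤ ∑ i, ∑ j, M i j ^ 2 := by
  rw [← Real.le_sqrt (norm_nonneg _) (by positivity), l2_opNorm_def]
  refine ContinuousLinearMap.opNorm_le_bound _ (Real.sqrt_nonneg _) fun x => ?_
  rw [EuclideanSpace.norm_eq, EuclideanSpace.norm_eq x, ← Real.sqrt_mul (by positivity)]
  refine Real.sqrt_le_sqrt ?_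
  rw [Finset.sum_mul]
  refine Finset.sum_le_sum fun i _ => ?_
  simpa [Matrix.mulVec, dotProduct, sq_abs] using
    Finset.sum_mul_sq_le_sq_mul_sq Finset.univ (M i) x

theorem l2_opNorm_pow_eight_le [DecidableEq m] (A : Matrix m n ℝ) :
    ‖A‖ ^ 8 ≤ ∑ i, ∑ j, (A * Aᵀ * (A * Aᵀ)) i j ^ 2 := by
  have hAt : Aᵀ = Aᴴ := (conjTranspose_eq_transpose_of_trivial A).symm
  have hGram : ‖A * Aᵀ‖ = ‖A‖ ^ 2 := by
    rw [sq, ← l2_opNorm_conjTranspose A, hAt]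
    simpa using l2_opNorm_conjTranspose_mul_self Aᴴ
  have hSq : ‖A * Aᵀ * (A * Aᵀ)‖ = ‖A * Aᵀ‖ ^ 2 := by
    have : (A * Aᵀ)ᴴ = A * Aᵀ := by rw [hAt, conjTranspose_mul, conjTranspose_conjTranspose]
    rw [sq, ← l2_opNorm_conjTranspose_mul_self, this]
  calc ‖A‖ ^ 8 = ‖A * Aᵀ * (A * Aᵀ)‖ ^ 2 := by rw [hSq, hGram]; ring
    _ ≤ _ := l2_opNorm_sq_le_sum_sq _

end Matrix

theorem mul_transpose_eq_smul_etaMat_add_smul_diagonal {N T : ℕ} (e : Matrix (Fin N) (Fin T) ℝ)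
    (s : Fin N → ℝ) : e * eᵀ = √(T : ℝ) • of (etaMat e s) + (T : ℝ) • diagonal s := by
  ext i j
  rcases Nat.eq_zero_or_pos T with rfl | hT
  · simp [mul_apply]
  · have hsqrt : √(T : ℝ) ≠ 0 := by positivity
    simp only [mul_apply, transpose_apply, Matrix.add_apply, Matrix.smul_apply, of_apply,
      diagonal_apply, etaMat, smul_eq_mul, mul_inv_cancel_left₀ hsqrt]
    ring

theorem etaMat_isSymm {N T : ℕ} (e : Matrix (Fin N) (Fin T) ℝ) (s : Fin N → ℝ) :
    (of (etaMat e s)).IsSymm :=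
  IsSymm.ext fun i j => by
    simp only [of_apply, etaMat, mul_comm (e j _)]
    rcases eq_or_ne i j with rfl | hij
    · rfl
    · simp [hij, hij.symm]

theorem spectral_norm_eighth_power_bound_general {N T : ℕ}
    (e : Matrix (Fin N) (Fin T) ℝ) (s : Fin N → ℝ) :
    specNorm e ^ 8 ≤
      3 * (T : ℝ) ^ 2 * ∑ i, ∑ j, (∑ k, etaMat e s i k * etaMat e s j k) ^ 2
        + 12 * (T : ℝ) ^ 3 * ∑ i, ∑ j, s i ^ 2 * etaMat e s i j ^ 2
        + 3 * (T : ℝ) ^ 4 * ∑ i, s i ^ 4 := by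
  have hsqrt : √(T : ℝ) ^ 2 = T := Real.sq_sqrt (Nat.cast_nonneg T)
  calc specNorm e ^ 8 ≤ ∑ i, ∑ j, (e * eᵀ * (e * eᵀ)) i j ^ 2 := l2_opNorm_pow_eight_le e
    _ ≤ 3 * √(T : ℝ) ^ 4 * ∑ i, ∑ j, (∑ k, etaMat e s i k * etaMat e s j k) ^ 2
          + 12 * √(T : ℝ) ^ 2 * (T : ℝ) ^ 2 * ∑ i, ∑ j, s i ^ 2 * etaMat e s i j ^ 2
          + 3 * (T : ℝ) ^ 4 * ∑ i, s i ^ 4 := by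
        rw [mul_transpose_eq_smul_etaMat_add_smul_diagonal]
        exact sum_sq_mul_self_smul_add_smul_diagonal_le (etaMat_isSymm e s) s _ _
    _ = _ := by rw [show √(T : ℝ) ^ 4 = (√(T : ℝ) ^ 2) ^ 2 by ring, hsqrt]; ring

/-- Deterministic eighth-power bound for the spectral norm:
`‖e‖⁸ ≤ 3T²·Σ_{i,j}(Σ_k η_{ik}η_{jk})² + 12T³·Σ_{i,j}s_i²η_{ij}² + 3T⁴·Σ_i s_i⁴`. -/
theorem spectral_norm_eighth_power_bound {N T : ℕ} (hN : 0 < N) (hT : 0 < T)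
    (e : Matrix (Fin N) (Fin T) ℝ) (s : Fin N → ℝ) (hs : ∀ i, 0 ≤ s i) :
    specNorm e ^ 8 ≤
      3 * (T : ℝ) ^ 2 * ∑ i, ∑ j, (∑ k, etaMat e s i k * etaMat e s j k) ^ 2
        + 12 * (T : ℝ) ^ 3 * ∑ i, ∑ j, s i ^ 2 * etaMat e s i j ^ 2
        + 3 * (T : ℝ) ^ 4 * ∑ i, s i ^ 4 :=
  spectral_norm_eighth_power_bound_general e s
end
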